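/- For any citation vector x, rec(x) = max{ ||u|| : u a uniform citation vector with u ⊑ x }, i.e. the rec-index equals the maximal total citation count of a uniform vector dominated by x. -/

import Mathlib

/-- A citation vector: a finite nonincreasing list of positive integers. -/
def CitVec (x : List ℕ) : Prop :=
  (∀ a ∈ x, 0 < a) ∧ List.Pairwise (· ≥ ·) x

/-- The rec-index: max over 1 ≤ i ≤ n of i·x_i (0 for the empty vector). -/
def recIdx (x : List ℕ) : ℕ :=
  ((List.range x.length).map (fun i => (i + 1) * x.getD i 0)).foldr max 0

/-- Domination: u ⊑ x. -/
def Dom (u x : List ℕ) : Prop :=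
  u.length ≤ x.length ∧ ∀ i < u.length, u.getD i 0 ≤ x.getD i 0

/-- Uniform: all entries equal. -/
def Uniform (x : List ℕ) : Prop := ∀ a ∈ x, ∀ b ∈ x, a = b

/-- x^[k]: add one citation to publication k (1-indexed; append a 1 if k = n+1). -/
def incr (x : List ℕ) (k : ℕ) : List ℕ :=
  if k ≤ x.length then x.set (k - 1) (x.getD (k - 1) 0 + 1) else x ++ [1]

/-- k is the smallest index j with x_j = x_k (taking x_{n+1} = 0);
equivalently all earlier entries are strictly larger. -/
def MinIndex (x : List ℕ) (k : ℕ) : Prop :=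
  1 ≤ k ∧ k ≤ x.length + 1 ∧ ∀ j, 1 ≤ j → j < k → x.getD (k - 1) 0 < x.getD (j - 1) 0

open List

theorem le_recIdx {x : List ℕ} {i : ℕ} (hi : i < x.length) :
    (i + 1) * x.getD i 0 ≤ recIdx x :=
  le_max_of_le' 0 (mem_map.2 ⟨i, mem_range.2 hi, rfl⟩) le_rfl

theorem exists_recIdx_eq {x : List ℕ} (hx : x ≠ []) :
    ∃ i < x.length, (i + 1) * x.getD i 0 = recIdx x := by
  set l := (range x.length).map (fun i => (i + 1) * x.getD i 0)
  have hl : l ≠ [] := by simpa [l] using hx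
  have hmem : recIdx x ∈ l := maximum_mem (foldr_max_of_ne_nil hl).symm
  simpa [l] using hmem

theorem getD_le_getD_of_pairwise_ge {x : List ℕ} (hx : x.Pairwise (· ≥ ·)) {i j : ℕ}
    (hij : i ≤ j) (hj : j < x.length) : x.getD j 0 ≤ x.getD i 0 := by
  rw [getD_eq_getElem _ _ hj, getD_eq_getElem _ _ (by omega)]
  rcases hij.eq_or_lt with rfl | hlt
  · rfl
  · exact pairwise_iff_getElem.1 hx i j _ hj hlt

theorem uniform_iff_exists_eq_replicate {u : List ℕ} :
    Uniform u ↔ ∃ n a, u = replicate n a := by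
  constructor
  · intro hu
    rcases u with _ | ⟨a, t⟩
    · exact ⟨0, 0, rfl⟩
    · exact ⟨_, a, eq_replicate_iff.2 ⟨rfl, fun b hb => hu b hb a mem_cons_self⟩⟩
  · rintro ⟨n, a, rfl⟩ b hb c hc
    rw [eq_of_mem_replicate hb, eq_of_mem_replicate hc]

theorem citVec_replicate (n : ℕ) {a : ℕ} (ha : 0 < a) : CitVec (replicate n a) :=
  ⟨fun _ hb => eq_of_mem_replicate hb ▸ ha, pairwise_replicate_of_refl⟩

theorem dom_replicate_getD {x : List ℕ} (hx : x.Pairwise (· ≥ ·)) {n : ℕ}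
    (hn : n < x.length) : Dom (replicate (n + 1) (x.getD n 0)) x := by
  refine ⟨by simpa using hn, fun j hj => ?_⟩
  rw [length_replicate] at hj
  rw [getD_eq_getElem _ _ (by simpa using hj), getElem_replicate]
  exact getD_le_getD_of_pairwise_ge hx (by omega) hn

theorem sum_replicate_le_recIdx {x : List ℕ} {n a : ℕ} (h : Dom (replicate n a) x) :
    (replicate n a).sum ≤ recIdx x := by
  cases n with
  | zero => simp
  | succ n =>
    have hn : n < x.length := by simpa using h.1
    have ha : a ≤ x.getD n 0 := by simpa using h.2 n (by simp)
    calc (replicate (n + 1) a).sum = (n + 1) * a := by simp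
      _ ≤ (n + 1) * x.getD n 0 := by gcongr
      _ ≤ recIdx x := le_recIdx hn

theorem rec_eq_max_uniform_sum (x : List ℕ) (hx : CitVec x) :
    IsGreatest {m : ℕ | ∃ u, CitVec u ∧ Uniform u ∧ Dom u x ∧ u.sum = m}
      (recIdx x) := by
  refine ⟨?_, ?_⟩
  · rcases eq_or_ne x [] with rfl | hne
    · exact ⟨[], by simp [CitVec], by simp [Uniform], by simp [Dom], rfl⟩
    obtain ⟨i, hi, hrec⟩ := exists_recIdx_eq hne
    have hpos : 0 < x.getD i 0 := by
      rw [getD_eq_getElem _ _ hi]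
      exact hx.1 _ (getElem_mem hi)
    exact ⟨replicate (i + 1) (x.getD i 0), citVec_replicate _ hpos,
      uniform_iff_exists_eq_replicate.2 ⟨_, _, rfl⟩, dom_replicate_getD hx.2 hi,
      by simpa using hrec⟩
  · rintro _ ⟨u, -, hu, hdom, rfl⟩
    obtain ⟨n, a, rfl⟩ := uniform_iff_exists_eq_replicate.1 hu
    exact sum_replicate_le_recIdx hdom
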